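/- arXiv:2207.11769 — 3 statements merged into one kernel-verified Lean document; each statement's English description precedes it below -/
import Mathlib

section
/- Let x, x_{m+1}, ..., x_l be exchangeable (in particular IID) real-valued random scores with values that are almost surely distinct. Define the p-value p(x) = (|{j : m+1 ≤ j ≤ l, x ≤ x_j}| + 1)/(l - m + 1). Then p(x) is uniformly distributed on {1/(l-m+1), 2/(l-m+1), ..., 1}. -/
open MeasureTheory Set
open scoped ENNReal Finset

/-! For a.s. distinct scores, the number of other scores that are at least a given one is a
bijection from the indices onto `{0, …, k}`. Exchangeability makes the events
"score `a` has exactly `r` scores above it" equiprobable in `a`, and for fixed `r` these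
`k + 1` events partition the sample space up to a null set, so each has probability
`1 / (k + 1)`. -/

section NumAtLeast

variable {ι α : Type*} [Fintype ι] [DecidableEq ι] [LinearOrder α]

def numAtLeast (v : ι → α) (i : ι) : ℕ :=
  #{j | j ≠ i ∧ v i ≤ v j}

lemma numAtLeast_lt_card (v : ι → α) (i : ι) : numAtLeast v i < Fintype.card ι := by
  calc numAtLeast v i ≤ #(Finset.univ.erase i) :=
        Finset.card_le_card fun j hj => by simp_all
    _ < Fintype.card ι := Finset.card_erase_lt_of_mem (Finset.mem_univ i)

lemma numAtLeast_lt_of_lt (v : ι → α) {i j : ι} (hij : v i < v j) :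
    numAtLeast v j < numAtLeast v i := by
  refine Finset.card_lt_card (Finset.ssubset_iff_of_subset ?_ |>.mpr ⟨j, ?_, ?_⟩)
  · intro l hl
    simp only [Finset.mem_filter, Finset.mem_univ, true_and] at hl ⊢
    exact ⟨by rintro rfl; exact hl.2.not_gt hij, (hij.trans_le hl.2).le⟩
  · simpa using ⟨fun h => hij.ne' (congrArg v h), hij.le⟩
  · simp

lemma numAtLeast_injective {v : ι → α} (hv : Function.Injective v) :
    Function.Injective (numAtLeast v) := by
  intro a b h
  rcases lt_trichotomy (v a) (v b) with hlt | heq | hgt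
  · exact absurd h (numAtLeast_lt_of_lt v hlt).ne'
  · exact hv heq
  · exact absurd h (numAtLeast_lt_of_lt v hgt).ne

lemma exists_numAtLeast_eq {v : ι → α} (hv : Function.Injective v) {r : ℕ}
    (hr : r < Fintype.card ι) : ∃ i, numAtLeast v i = r := by
  have himage : Finset.univ.image (numAtLeast v) = Finset.range (Fintype.card ι) :=
    Finset.eq_of_subset_of_card_le
      (fun n hn => by
        obtain ⟨i, -, rfl⟩ := Finset.mem_image.mp hn
        exact Finset.mem_range.mpr (numAtLeast_lt_card v i))
      (by rw [Finset.card_image_of_injective _ (numAtLeast_injective hv)]; simp)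
  simpa using himage.ge (Finset.mem_range.mpr hr)

lemma numAtLeast_comp_perm (v : ι → α) (σ : Equiv.Perm ι) (i : ι) :
    numAtLeast (v ∘ σ) i = numAtLeast v (σ i) :=
  Finset.card_equiv σ (by simp)

lemma measurableSet_setOf_numAtLeast_eq [TopologicalSpace α] [OrderClosedTopology α]
    [SecondCountableTopology α] [MeasurableSpace α] [OpensMeasurableSpace α] (i : ι) (r : ℕ) :
    MeasurableSet {v : ι → α | numAtLeast v i = r} := by
  have hmeas : Measurable fun v : ι → α => numAtLeast v i := by
    simp_rw [numAtLeast, Finset.card_filter]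
    refine Finset.measurable_sum _ fun j _ => Measurable.ite ?_ measurable_const measurable_const
    exact (MeasurableSet.const (j ≠ i)).inter
      (measurableSet_le (measurable_pi_apply i) (measurable_pi_apply j))
  exact hmeas (measurableSet_singleton r)

end NumAtLeast

lemma numAtLeast_last {α : Type*} [LinearOrder α] {k : ℕ} (v : Fin (k + 1) → α) :
    numAtLeast v (Fin.last k) = #{j : Fin k | v (Fin.last k) ≤ v j.castSucc} := by
  rw [numAtLeast, eq_comm, ← Finset.card_map Fin.castSuccEmb]
  refine congrArg Finset.card (Finset.ext fun j => ?_)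
  cases j using Fin.lastCases <;> simp [Fin.castSucc_ne_last]

section Exchangeable

variable {Ω ι α : Type*} [MeasurableSpace Ω] {μ : Measure Ω}
  [Fintype ι] [DecidableEq ι] [LinearOrder α] [TopologicalSpace α] [OrderClosedTopology α]
  [SecondCountableTopology α] [MeasurableSpace α] [OpensMeasurableSpace α]
  {Y : Ω → ι → α}

lemma measure_numAtLeast_eq_eq_of_exchangeable (hY : Measurable Y)
    (hexch : ∀ σ : Equiv.Perm ι, μ.map (fun ω => Y ω ∘ σ) = μ.map Y) (a b : ι) (r : ℕ) :
    μ {ω | numAtLeast (Y ω) a = r} = μ {ω | numAtLeast (Y ω) b = r} := by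
  have hσ : Measurable fun ω => Y ω ∘ Equiv.swap b a :=
    measurable_pi_lambda _ fun j => (measurable_pi_apply _).comp hY
  have h := congrArg (· {v | numAtLeast v b = r}) (hexch (Equiv.swap b a))
  simp only [Measure.map_apply hσ (measurableSet_setOf_numAtLeast_eq b r),
    Measure.map_apply hY (measurableSet_setOf_numAtLeast_eq b r)] at h
  simpa [preimage_ofPred_eq, numAtLeast_comp_perm] using h

lemma sum_measure_numAtLeast_eq [IsProbabilityMeasure μ] (hY : Measurable Y)
    (hinj : ∀ᵐ ω ∂μ, Function.Injective (Y ω)) {r : ℕ} (hr : r < Fintype.card ι) :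
    ∑ a, μ {ω | numAtLeast (Y ω) a = r} = 1 := by
  have hmeas : ∀ a, MeasurableSet {ω | numAtLeast (Y ω) a = r} := fun a =>
    hY (measurableSet_setOf_numAtLeast_eq a r)
  have hnull : μ {ω | ¬Function.Injective (Y ω)} = 0 := ae_iff.mp hinj
  have hdisj :
      Pairwise (Function.onFun (AEDisjoint μ) fun a => {ω | numAtLeast (Y ω) a = r}) := by
    intro a b hab
    refine measure_mono_null (fun ω ⟨ha, hb⟩ => ?_) hnull
    exact fun hω => hab (numAtLeast_injective hω (ha.trans hb.symm))
  have hcover : μ (⋃ a, {ω | numAtLeast (Y ω) a = r})ᶜ = 0 := by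
    refine measure_mono_null (fun ω hω => ?_) hnull
    exact fun hinjω => hω (mem_iUnion.mpr (exists_numAtLeast_eq hinjω hr))
  rw [← tsum_fintype (L := SummationFilter.unconditional _),
    ← measure_iUnion₀ hdisj fun a => (hmeas a).nullMeasurableSet]
  exact (prob_compl_eq_zero_iff (MeasurableSet.iUnion hmeas)).mp hcover

theorem measure_numAtLeast_eq_of_exchangeable [IsProbabilityMeasure μ] (hY : Measurable Y)
    (hexch : ∀ σ : Equiv.Perm ι, μ.map (fun ω => Y ω ∘ σ) = μ.map Y)
    (hinj : ∀ᵐ ω ∂μ, Function.Injective (Y ω)) (i : ι) {r : ℕ} (hr : r < Fintype.card ι) :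
    μ {ω | numAtLeast (Y ω) i = r} = (Fintype.card ι : ℝ≥0∞)⁻¹ := by
  have hsum := sum_measure_numAtLeast_eq hY hinj hr
  simp only [measure_numAtLeast_eq_eq_of_exchangeable hY hexch _ i, Finset.sum_const,
    Finset.card_univ, nsmul_eq_mul] at hsum
  exact ENNReal.eq_inv_of_mul_eq_one_left (by rwa [mul_comm] at hsum)

end Exchangeable

theorem conformal_p_value_uniform_general
    {Ω : Type*} [MeasurableSpace Ω] (μ : Measure Ω) [IsProbabilityMeasure μ]
    (k : ℕ) (X : Fin (k + 1) → Ω → ℝ) (hXmeas : ∀ i, Measurable (X i))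
    (hexch : ∀ σ : Equiv.Perm (Fin (k + 1)),
      Measure.map (fun ω i => X (σ i) ω) μ = Measure.map (fun ω i => X i ω) μ)
    (hdistinct : ∀ᵐ ω ∂μ, ∀ i j, i ≠ j → X i ω ≠ X j ω)
    (p : Ω → ℝ)
    (hp : ∀ ω, p ω =
      (((Finset.univ.filter (fun j : Fin k =>
          X (Fin.last k) ω ≤ X j.castSucc ω)).card : ℝ) + 1) / (k + 1)) :
    ∀ i ∈ Finset.Icc 1 (k + 1),
      μ {ω | p ω = (i : ℝ) / (k + 1)} = 1 / (k + 1 : ℝ≥0∞) := by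
  intro i hi
  obtain ⟨hi1, hik⟩ := Finset.mem_Icc.mp hi
  have hinj : ∀ᵐ ω ∂μ, Function.Injective fun j => X j ω := by
    filter_upwards [hdistinct] with ω hω a b hab
    by_contra hne
    exact hω a b hne hab
  have hset : {ω | p ω = (i : ℝ) / (k + 1)} =
      {ω | numAtLeast (fun j => X j ω) (Fin.last k) = i - 1} := by
    ext ω
    rw [mem_ofPred_eq, mem_ofPred_eq, hp ω, div_left_inj' (by positivity), numAtLeast_last]
    rw [← Nat.cast_succ, Nat.cast_inj]
    omega
  rw [hset, measure_numAtLeast_eq_of_exchangeable (measurable_pi_lambda _ hXmeas) hexch hinj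
    (Fin.last k) (by rw [Fintype.card_fin]; omega)]
  simp

/-- Conformal calibration lemma: with `k` exchangeable calibration scores and one
exchangeable test score (index `Fin.last k`), all almost surely pairwise distinct,
the conformal p-value `(|{j : x ≤ x_j}| + 1)/(k+1)` is uniformly distributed on
`{1/(k+1), ..., (k+1)/(k+1)}`. -/
theorem conformal_p_value_uniform
    {Ω : Type*} [MeasurableSpace Ω] (μ : Measure Ω) [IsProbabilityMeasure μ]
    (k : ℕ) (hk : 0 < k) (X : Fin (k + 1) → Ω → ℝ) (hXmeas : ∀ i, Measurable (X i))
    (hexch : ∀ σ : Equiv.Perm (Fin (k + 1)),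
      Measure.map (fun ω i => X (σ i) ω) μ = Measure.map (fun ω i => X i ω) μ)
    (hdistinct : ∀ᵐ ω ∂μ, ∀ i j, i ≠ j → X i ω ≠ X j ω)
    (p : Ω → ℝ)
    (hp : ∀ ω, p ω =
      (((Finset.univ.filter (fun j : Fin k =>
          X (Fin.last k) ω ≤ X j.castSucc ω)).card : ℝ) + 1) / (k + 1)) :
    ∀ i ∈ Finset.Icc 1 (k + 1),
      μ {ω | p ω = (i : ℝ) / (k + 1)} = 1 / (k + 1 : ℝ≥0∞) :=
  conformal_p_value_uniform_general μ k X hXmeas hexch hdistinct p hp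
end

section
/- Let α, α_{m+1}, ..., α_l be exchangeable real-valued random variables (possibly with ties) and define p = (|{j : α ≤ α_j}| + 1)/(l - m + 1). Then for every ε ∈ (0,1), Pr(p ≤ ε) ≤ ε. -/
open MeasureTheory Set
open scoped ENNReal

/-! Let `rank a i` count the other coordinates `j` with `a i ≤ a j`, so that `p ≤ ε` says that
the test score has `rank < m := ⌊ε (k + 1)⌋₊`. In any configuration at most `m` coordinates have
rank `< m`: the smallest of them has all the others weakly above it, ties included. By
exchangeability every coordinate has rank `< m` with the same probability, so summing over the
`k + 1` coordinates gives `(k + 1) Pr(p ≤ ε) ≤ m ≤ ε (k + 1)`. -/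

open Classical in
lemma sum_measure_le_of_forall_card_le {Ω ι : Type*} [MeasurableSpace Ω] [Fintype ι]
    (μ : Measure Ω) {s : ι → Set Ω} (hs : ∀ i, MeasurableSet (s i)) {m : ℕ}
    (hcard : ∀ ω, (Finset.univ.filter fun i => ω ∈ s i).card ≤ m) :
    ∑ i, μ (s i) ≤ m * μ univ := by
  calc ∑ i, μ (s i) = ∫⁻ ω, ∑ i, (s i).indicator 1 ω ∂μ := by
        rw [lintegral_finsetSum _ fun i _ => measurable_one.indicator (hs i)]
        exact Finset.sum_congr rfl fun i _ => (lintegral_indicator_one (hs i)).symm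
    _ ≤ ∫⁻ _, (m : ℝ≥0∞) ∂μ := by
        refine lintegral_mono fun ω => ?_
        simp only [indicator_apply, Pi.one_apply, Finset.sum_boole]
        exact_mod_cast hcard ω
    _ = m * μ univ := lintegral_const _

namespace Conformal

variable {ι α : Type*} [Fintype ι] [DecidableEq ι] [LinearOrder α]

def rank (a : ι → α) (i : ι) : ℕ :=
  (Finset.univ.filter fun j => j ≠ i ∧ a i ≤ a j).card

lemma rank_comp_perm (a : ι → α) (σ : Equiv.Perm ι) (i : ι) :
    rank (a ∘ σ) i = rank a (σ i) :=
  Finset.card_equiv σ fun j => by simp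

lemma card_rank_lt_le (a : ι → α) (m : ℕ) :
    (Finset.univ.filter fun i => rank a i < m).card ≤ m := by
  set S := Finset.univ.filter fun i => rank a i < m
  rcases S.eq_empty_or_nonempty with hS | hS
  · simp [hS]
  obtain ⟨i, hiS, hmin⟩ := S.exists_min_image a hS
  have herase : S.erase i ⊆ Finset.univ.filter fun j => j ≠ i ∧ a i ≤ a j := fun j hj => by
    rw [Finset.mem_erase] at hj
    simpa using ⟨hj.1, hmin j hj.2⟩
  have hcard : S.card - 1 ≤ rank a i :=
    Finset.card_erase_of_mem hiS ▸ Finset.card_le_card herase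
  have hrank : rank a i < m := (Finset.mem_filter.mp hiS).2
  omega

lemma measurable_rank [TopologicalSpace α] [MeasurableSpace α] [OpensMeasurableSpace α]
    [OrderClosedTopology α] [SecondCountableTopology α] (i : ι) :
    Measurable fun a : ι → α => rank a i := by
  have hsum : (fun a : ι → α => rank a i) =
      fun a => ∑ j, if j ≠ i ∧ a i ≤ a j then 1 else 0 := by
    funext a
    rw [rank, Finset.card_filter]
  rw [hsum]
  refine Finset.measurable_sum _ fun j _ => Measurable.ite ?_ measurable_const measurable_const
  exact (MeasurableSet.const _).inter
    (measurableSet_le (measurable_pi_apply i) (measurable_pi_apply j))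

section Exchangeable

variable [TopologicalSpace α] [MeasurableSpace α] [OpensMeasurableSpace α]
  [OrderClosedTopology α] [SecondCountableTopology α]
  {Ω : Type*} [MeasurableSpace Ω] (μ : Measure Ω) {X : ι → Ω → α}

lemma measure_rank_lt_perm_eq (hX : ∀ i, Measurable (X i))
    (hexch : ∀ σ : Equiv.Perm ι,
      μ.map (fun ω i => X (σ i) ω) = μ.map (fun ω i => X i ω))
    (σ : Equiv.Perm ι) (i : ι) (m : ℕ) :
    μ {ω | rank (fun l => X l ω) (σ i) < m} = μ {ω | rank (fun l => X l ω) i < m} := by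
  have hS : MeasurableSet {a : ι → α | rank a i < m} :=
    measurable_rank i (measurableSet_Iio (a := m))
  calc μ {ω | rank (fun l => X l ω) (σ i) < m}
      = μ ((fun ω l => X (σ l) ω) ⁻¹' {a | rank a i < m}) := by
        simp only [preimage_ofPred_eq]
        simp_rw [← rank_comp_perm]
        rfl
    _ = μ ((fun ω l => X l ω) ⁻¹' {a | rank a i < m}) := by
        rw [← Measure.map_apply (measurable_pi_lambda _ fun l => hX (σ l)) hS, hexch σ,
          Measure.map_apply (measurable_pi_lambda _ hX) hS]
    _ = μ {ω | rank (fun l => X l ω) i < m} := rfl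

lemma card_mul_measure_rank_lt_le (hX : ∀ i, Measurable (X i))
    (hexch : ∀ σ : Equiv.Perm ι,
      μ.map (fun ω i => X (σ i) ω) = μ.map (fun ω i => X i ω))
    (i : ι) (m : ℕ) :
    Fintype.card ι * μ {ω | rank (fun l => X l ω) i < m} ≤ m * μ univ := by
  have hsum : ∑ j, μ {ω | rank (fun l => X l ω) j < m} =
      Fintype.card ι * μ {ω | rank (fun l => X l ω) i < m} := by
    rw [Finset.sum_congr rfl fun j _ => Equiv.swap_apply_left i j ▸
      measure_rank_lt_perm_eq μ hX hexch (Equiv.swap i j) i m]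
    simp
  rw [← hsum]
  refine sum_measure_le_of_forall_card_le μ (fun j => ?_) fun ω => ?_
  · exact measurable_rank j (measurableSet_Iio (a := m)) |>.preimage
      (measurable_pi_lambda _ hX)
  · simpa using card_rank_lt_le (fun l => X l ω) m

end Exchangeable

lemma card_filter_castSucc_eq_rank_last {k : ℕ} (a : Fin (k + 1) → α) :
    (Finset.univ.filter fun j : Fin k => a (Fin.last k) ≤ a j.castSucc).card =
      rank a (Fin.last k) := by
  rw [rank, Finset.card_filter, Finset.card_filter, Fin.sum_univ_castSucc]
  simp [Fin.castSucc_ne_last]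

end Conformal

theorem conformal_p_value_valid_with_ties_general
    {Ω : Type*} [MeasurableSpace Ω] (μ : Measure Ω) [IsProbabilityMeasure μ]
    (k : ℕ) (X : Fin (k + 1) → Ω → ℝ) (hXmeas : ∀ i, Measurable (X i))
    (hexch : ∀ σ : Equiv.Perm (Fin (k + 1)),
      Measure.map (fun ω i => X (σ i) ω) μ = Measure.map (fun ω i => X i ω) μ)
    (p : Ω → ℝ)
    (hp : ∀ ω, p ω =
      (((Finset.univ.filter (fun j : Fin k =>
          X (Fin.last k) ω ≤ X j.castSucc ω)).card : ℝ) + 1) / (k + 1))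
    (ε : ℝ) (hε : ε ∈ Set.Ioo (0 : ℝ) 1) :
    μ {ω | p ω ≤ ε} ≤ ENNReal.ofReal ε := by
  set m := ⌊ε * (k + 1)⌋₊
  have hεk : 0 ≤ ε * (k + 1) := by have := hε.1; positivity
  have hevent : {ω | p ω ≤ ε} = {ω | Conformal.rank (fun l => X l ω) (Fin.last k) < m} := by
    ext ω
    rw [mem_ofPred_eq, mem_ofPred_eq, hp,
      Conformal.card_filter_castSucc_eq_rank_last (fun l => X l ω), div_le_iff₀ (by positivity),
      Nat.lt_iff_add_one_le, Nat.le_floor_iff hεk]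
    push_cast
    rfl
  have hm : (m : ℝ≥0∞) ≤ ((k + 1 : ℕ) : ℝ≥0∞) * ENNReal.ofReal ε := by
    rw [← ENNReal.ofReal_natCast, ← ENNReal.ofReal_natCast (k + 1),
      ← ENNReal.ofReal_mul (by positivity)]
    refine ENNReal.ofReal_le_ofReal ?_
    push_cast
    rw [mul_comm]
    exact Nat.floor_le hεk
  have hbound := Conformal.card_mul_measure_rank_lt_le μ hXmeas hexch (Fin.last k) m
  rw [Fintype.card_fin, measure_univ, mul_one] at hbound
  rw [hevent]
  exact (ENNReal.mul_le_mul_iff_right (by simp) (by simp)).mp (hbound.trans hm)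

/-- Conformal validity with ties: for exchangeable scores `α, α_{m+1}, ..., α_l`
(here `k` calibration scores and the test score at index `Fin.last k`), the
rank-based p-value `p = (|{j : α ≤ α_j}| + 1)/(k+1)` satisfies `Pr(p ≤ ε) ≤ ε`. -/
theorem conformal_p_value_valid_with_ties
    {Ω : Type*} [MeasurableSpace Ω] (μ : Measure Ω) [IsProbabilityMeasure μ]
    (k : ℕ) (hk : 0 < k) (X : Fin (k + 1) → Ω → ℝ) (hXmeas : ∀ i, Measurable (X i))
    (hexch : ∀ σ : Equiv.Perm (Fin (k + 1)),
      Measure.map (fun ω i => X (σ i) ω) μ = Measure.map (fun ω i => X i ω) μ)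
    (p : Ω → ℝ)
    (hp : ∀ ω, p ω =
      (((Finset.univ.filter (fun j : Fin k =>
          X (Fin.last k) ω ≤ X j.castSucc ω)).card : ℝ) + 1) / (k + 1))
    (ε : ℝ) (hε : ε ∈ Set.Ioo (0 : ℝ) 1) :
    μ {ω | p ω ≤ ε} ≤ ENNReal.ofReal ε :=
  conformal_p_value_valid_with_ties_general μ k X hXmeas hexch p hp ε hε
end

section
/- If P_1, ..., P_n are independent random variables each taking values in (0,1] and each satisfying Pr(P_k < u) ≤ u for all u ∈ (0,1) (i.e., each is super-uniform), then Pr(∏_{k=1}^n P_k ≤ t) ≤ F_n(t) = t·∑_{i=0}^{n-1}(-log t)^i/i! for all t ∈ (0,1]. -/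
open MeasureTheory ProbabilityTheory Set
open scoped ENNReal

/-- Fisher's combination function `F_n(t) = t · ∑_{i=0}^{n-1} (-log t)^i / i!`. -/
noncomputable def fisherF (n : ℕ) (t : ℝ) : ℝ :=
  t * ∑ i ∈ Finset.range n, (-Real.log t) ^ i / (Nat.factorial i)

/-! Induction on the number of p-values. Let `Q` be a product whose law satisfies
`Pr(Q ≤ s) ≤ F_m(s)` on `(0,1)` and `P` an independent super-uniform variable. Conditioning on
`Q > 0`, replacing `P` by an exact uniform `U` can only increase `Pr(QP ≤ t)`, because
`Pr(P ≤ s) ≤ Pr(U ≤ s)` for every `s`. Conditioning on `U` instead,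
`Pr(QU ≤ t) = ∫₀¹ Pr(Q ≤ t/u) du ≤ t + ∫ₜ¹ F_m(t/u) du = F_{m+1}(t)`,
the last integral being computed from the primitive
`u ↦ t ∑_{i<m} (log u - log t)^{i+1} / (i+1)!` of `u ↦ F_m(t/u)`. -/

lemma fisherF_nonneg (n : ℕ) {t : ℝ} (ht₀ : 0 < t) (ht₁ : t ≤ 1) : 0 ≤ fisherF n t := by
  have : 0 ≤ -Real.log t := neg_nonneg.mpr (Real.log_nonpos ht₀.le ht₁)
  unfold fisherF
  positivity

lemma fisherF_div_nonneg (n : ℕ) {t u : ℝ} (ht : 0 < t) (htu : t ≤ u) :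
    0 ≤ fisherF n (t / u) :=
  fisherF_nonneg n (div_pos ht (ht.trans_le htu)) ((div_le_one (ht.trans_le htu)).mpr htu)

lemma continuousOn_fisherF (n : ℕ) : ContinuousOn (fisherF n) {0}ᶜ := by
  unfold fisherF
  fun_prop (disch := assumption)

lemma fisherF_succ_sub_self (n : ℕ) (t : ℝ) :
    fisherF (n + 1) t - t =
      t * ∑ i ∈ Finset.range n, (-Real.log t) ^ (i + 1) / (i + 1).factorial := by
  simp [fisherF, Finset.sum_range_succ', mul_add]

lemma hasDerivAt_fisherF_div_primitive (n : ℕ) {t u : ℝ} (ht : 0 < t) (hu : 0 < u) :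
    HasDerivAt (fun x => t * ∑ i ∈ Finset.range n,
      (Real.log x - Real.log t) ^ (i + 1) / (i + 1).factorial) (fisherF n (t / u)) u := by
  have hlog : HasDerivAt (fun x => Real.log x - Real.log t) u⁻¹ u :=
    (Real.hasDerivAt_log hu.ne').sub_const _
  have hterm (i : ℕ) : HasDerivAt
      (fun x => (Real.log x - Real.log t) ^ (i + 1) / (i + 1).factorial)
      ((Real.log u - Real.log t) ^ i / i.factorial * u⁻¹) u := by
    refine ((hlog.pow (i + 1)).div_const _).congr_deriv ?_
    rw [Nat.factorial_succ]
    push_cast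
    field_simp
  refine ((HasDerivAt.fun_sum fun i _ => hterm i).const_mul t).congr_deriv ?_
  rw [fisherF, Real.log_div ht.ne' hu.ne', Finset.mul_sum, Finset.mul_sum]
  refine Finset.sum_congr rfl fun i _ => ?_
  ring

lemma continuousOn_fisherF_div (n : ℕ) {t : ℝ} (ht : 0 < t) :
    ContinuousOn (fun u => fisherF n (t / u)) (Ioi 0) :=
  (continuousOn_fisherF n).comp (continuousOn_const.div continuousOn_id fun _ hu => hu.ne')
    fun _ hu => (div_pos ht hu).ne'

lemma integral_fisherF_div {n : ℕ} {t : ℝ} (ht₀ : 0 < t) (ht₁ : t ≤ 1) :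
    ∫ u in t..1, fisherF n (t / u) = fisherF (n + 1) t - t := by
  have hpos : uIcc t 1 ⊆ Ioi 0 := fun u hu => ht₀.trans_le (uIcc_of_le ht₁ ▸ hu).1
  rw [intervalIntegral.integral_eq_sub_of_hasDerivAt
    (fun u hu => hasDerivAt_fisherF_div_primitive n ht₀ (hpos hu))
    ((continuousOn_fisherF_div n ht₀).mono hpos).intervalIntegrable,
    fisherF_succ_sub_self]
  simp

lemma lintegral_ofReal_fisherF_div {n : ℕ} {t : ℝ} (ht₀ : 0 < t) (ht₁ : t ≤ 1) :
    ∫⁻ u in Ioc t 1, ENNReal.ofReal (fisherF n (t / u)) =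
      ENNReal.ofReal (fisherF (n + 1) t - t) := by
  have hint : IntegrableOn (fun u => fisherF n (t / u)) (Ioc t 1) :=
    (continuousOn_fisherF_div n ht₀ |>.mono (Icc_subset_Ioi_iff ht₁ |>.mpr ht₀))
      |>.integrableOn_Icc |>.mono_set Ioc_subset_Icc_self
  have hnn : 0 ≤ᵐ[volume.restrict (Ioc t 1)] fun u => fisherF n (t / u) :=
    (ae_restrict_iff' measurableSet_Ioc).mpr <|
      ae_of_all _ fun _ hu => fisherF_div_nonneg n ht₀ hu.1.le
  rw [← ofReal_integral_eq_lintegral_ofReal hint hnn, ← intervalIntegral.integral_of_le ht₁,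
    integral_fisherF_div ht₀ ht₁]

lemma self_le_fisherF_succ (n : ℕ) {t : ℝ} (ht₀ : 0 < t) (ht₁ : t ≤ 1) :
    t ≤ fisherF (n + 1) t := by
  have : 0 ≤ ∫ u in t..1, fisherF n (t / u) :=
    intervalIntegral.integral_nonneg ht₁ fun _ hu => fisherF_div_nonneg n ht₀ hu.1
  rw [integral_fisherF_div ht₀ ht₁] at this
  linarith

lemma fisherF_one {n : ℕ} (hn : 0 < n) : fisherF n 1 = 1 := by
  obtain ⟨m, rfl⟩ := Nat.exists_eq_add_of_lt hn
  simp [fisherF, Finset.sum_range_succ']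

lemma measurable_fisherF (n : ℕ) : Measurable (fisherF n) := by
  unfold fisherF
  fun_prop

lemma measurableSet_mul_le (t : ℝ) : MeasurableSet {p : ℝ × ℝ | p.1 * p.2 ≤ t} :=
  measurableSet_le (by fun_prop) measurable_const

section

variable {Ω : Type*} [MeasurableSpace Ω] {μ : Measure Ω}

lemma measure_le_le_ofReal_of_superUniform {X : Ω → ℝ}
    (hX : ∀ u ∈ Ioo (0 : ℝ) 1, μ {ω | X ω < u} ≤ ENNReal.ofReal u) {s : ℝ}
    (hs : s ∈ Ioo (0 : ℝ) 1) : μ {ω | X ω ≤ s} ≤ ENNReal.ofReal s := by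
  refine ge_of_tendsto
    (ENNReal.continuous_ofReal.tendsto s |>.mono_left (nhdsWithin_le_nhds (s := Ioi s))) ?_
  filter_upwards [Ioo_mem_nhdsGT hs.2] with v hv
  calc μ {ω | X ω ≤ s} ≤ μ {ω | X ω < v} := measure_mono fun _ hω => hω.trans_lt hv.1
    _ ≤ ENNReal.ofReal v := hX v ⟨hs.1.trans hv.1, hv.2⟩

lemma map_Iic_le_uniform_of_superUniform [IsProbabilityMeasure μ] {X : Ω → ℝ}
    (hXm : Measurable X) (hXpos : ∀ ω, 0 < X ω)
    (hX : ∀ u ∈ Ioo (0 : ℝ) 1, μ {ω | X ω < u} ≤ ENNReal.ofReal u)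
    (s : ℝ) : μ.map X (Iic s) ≤ volume.restrict (Ioo (0 : ℝ) 1) (Iic s) := by
  rw [Measure.map_apply hXm measurableSet_Iic, Measure.restrict_apply measurableSet_Iic]
  rcases le_or_gt s 0 with hs₀ | hs₀
  · have : X ⁻¹' Iic s = ∅ :=
      eq_empty_of_forall_notMem fun ω hω => (hXpos ω).not_ge (hω.trans hs₀)
    simp [this]
  rcases lt_or_ge s 1 with hs₁ | hs₁
  · calc μ (X ⁻¹' Iic s) ≤ ENNReal.ofReal s :=
          measure_le_le_ofReal_of_superUniform hX ⟨hs₀, hs₁⟩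
      _ = volume (Ioc 0 s) := by simp
      _ ≤ volume (Iic s ∩ Ioo 0 1) :=
        measure_mono fun x hx => ⟨hx.2, hx.1, hx.2.trans_lt hs₁⟩
  · calc μ (X ⁻¹' Iic s) ≤ 1 := prob_le_one
      _ = volume (Ioo (0 : ℝ) 1) := by simp
      _ ≤ volume (Iic s ∩ Ioo 0 1) :=
        measure_mono fun x hx => ⟨hx.2.le.trans hs₁, hx⟩

lemma measure_mul_le_eq_prod_map {X Y : Ω → ℝ} [IsFiniteMeasure μ] (hX : Measurable X)
    (hY : Measurable Y) (hXY : IndepFun X Y μ) (t : ℝ) :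
    μ {ω | X ω * Y ω ≤ t} = ((μ.map X).prod (μ.map Y)) {p | p.1 * p.2 ≤ t} := by
  rw [← (indepFun_iff_map_prod_eq_prod_map_map hX.aemeasurable hY.aemeasurable).mp hXY,
    Measure.map_apply (hX.prodMk hY) (measurableSet_mul_le t)]
  rfl

end

lemma prod_mul_le_le_of_Iic_le {ν ρ σ : Measure ℝ} [SFinite ν] [SFinite ρ] [SFinite σ]
    (hν : ∀ᵐ q ∂ν, 0 < q) (hρσ : ∀ s, ρ (Iic s) ≤ σ (Iic s)) (t : ℝ) :
    (ν.prod ρ) {p | p.1 * p.2 ≤ t} ≤ (ν.prod σ) {p | p.1 * p.2 ≤ t} := by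
  rw [Measure.prod_apply (measurableSet_mul_le t), Measure.prod_apply (measurableSet_mul_le t)]
  refine lintegral_mono_ae (hν.mono fun q hq => ?_)
  have : Prod.mk q ⁻¹' {p : ℝ × ℝ | p.1 * p.2 ≤ t} = Iic (t / q) := by
    ext x
    simp [le_div_iff₀' hq]
  simpa only [this] using hρσ (t / q)

lemma prod_uniform_mul_le_le_fisherF_succ {ν : Measure ℝ} [IsProbabilityMeasure ν] {n : ℕ}
    (hν : ∀ s ∈ Ioo (0 : ℝ) 1, ν (Iic s) ≤ ENNReal.ofReal (fisherF n s)) {t : ℝ}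
    (ht : t ∈ Ioo (0 : ℝ) 1) :
    (ν.prod (volume.restrict (Ioo (0 : ℝ) 1))) {p | p.1 * p.2 ≤ t}
      ≤ ENNReal.ofReal (fisherF (n + 1) t) := by
  have hsection {u : ℝ} (hu : 0 < u) :
      (fun q => (q, u)) ⁻¹' {p : ℝ × ℝ | p.1 * p.2 ≤ t} = Iic (t / u) := by
    ext x
    simp [le_div_iff₀ hu]
  have hsmall : ∫⁻ u in Ioc 0 t, ν (Iic (t / u)) ≤ ENNReal.ofReal t :=
    calc ∫⁻ u in Ioc 0 t, ν (Iic (t / u)) ≤ ∫⁻ _ in Ioc 0 t, 1 :=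
          lintegral_mono fun _ => prob_le_one
      _ = ENNReal.ofReal t := by simp
  have hlarge : ∫⁻ u in Ioo t 1, ν (Iic (t / u)) ≤ ENNReal.ofReal (fisherF (n + 1) t - t) :=
    calc ∫⁻ u in Ioo t 1, ν (Iic (t / u)) ≤ ∫⁻ u in Ioc t 1, ν (Iic (t / u)) :=
          lintegral_mono_set Ioo_subset_Ioc_self
      _ ≤ ∫⁻ u in Ioc t 1, ENNReal.ofReal (fisherF n (t / u)) :=
          setLIntegral_mono ((measurable_fisherF n).comp (by fun_prop)).ennreal_ofReal fun u hu =>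
            hν _ ⟨div_pos ht.1 (ht.1.trans hu.1), (div_lt_one (ht.1.trans hu.1)).mpr hu.1⟩
      _ = ENNReal.ofReal (fisherF (n + 1) t - t) := lintegral_ofReal_fisherF_div ht.1 ht.2.le
  calc (ν.prod (volume.restrict (Ioo (0 : ℝ) 1))) {p | p.1 * p.2 ≤ t}
      = ∫⁻ u in Ioo 0 1, ν (Iic (t / u)) := by
        rw [Measure.prod_apply_symm (measurableSet_mul_le t)]
        exact setLIntegral_congr_fun measurableSet_Ioo fun u hu => by rw [hsection hu.1]
    _ = (∫⁻ u in Ioc 0 t, ν (Iic (t / u))) + ∫⁻ u in Ioo t 1, ν (Iic (t / u)) := by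
        rw [← Ioc_union_Ioo_eq_Ioo ht.1.le ht.2, lintegral_union measurableSet_Ioo
          (Ioc_disjoint_Ioi_same.mono_right Ioo_subset_Ioi_self)]
    _ ≤ ENNReal.ofReal t + ENNReal.ofReal (fisherF (n + 1) t - t) := add_le_add hsmall hlarge
    _ = ENNReal.ofReal (fisherF (n + 1) t) := by
        rw [← ENNReal.ofReal_add ht.1.le (sub_nonneg.mpr (self_le_fisherF_succ n ht.1 ht.2.le)),
          add_sub_cancel]

-- `t < 1` is needed already for `s = ∅`, where the product is `1` and `F_0 = 0`.
lemma measure_prod_le_le_fisherF {Ω ι : Type*} [MeasurableSpace Ω] (μ : Measure Ω)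
    [IsProbabilityMeasure μ] {P : ι → Ω → ℝ} (hPm : ∀ i, Measurable (P i))
    (hindep : iIndepFun P μ) (hpos : ∀ i ω, 0 < P i ω)
    (hsuper : ∀ i, ∀ u ∈ Ioo (0 : ℝ) 1, μ {ω | P i ω < u} ≤ ENNReal.ofReal u)
    (s : Finset ι) {t : ℝ} (ht : t ∈ Ioo (0 : ℝ) 1) :
    μ {ω | ∏ i ∈ s, P i ω ≤ t} ≤ ENNReal.ofReal (fisherF s.card t) := by
  induction s using Finset.cons_induction generalizing t with
  | empty => simp [not_le.mpr ht.2]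
  | cons a s ha ih =>
    set Q : Ω → ℝ := fun ω => ∏ i ∈ s, P i ω
    have hQm : Measurable Q := Finset.measurable_prod s fun i _ => hPm i
    have hQind : IndepFun Q (P a) μ := by
      simpa only [Finset.prod_fn] using hindep.indepFun_finsetProd_of_notMem hPm ha
    have hQpos : ∀ᵐ q ∂μ.map Q, 0 < q :=
      (ae_map_iff hQm.aemeasurable measurableSet_Ioi).mpr <|
        ae_of_all _ fun ω => Finset.prod_pos fun i _ => hpos i ω
    have : IsProbabilityMeasure (μ.map Q) := Measure.isProbabilityMeasure_map hQm.aemeasurable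
    calc μ {ω | ∏ i ∈ Finset.cons a s ha, P i ω ≤ t}
        = ((μ.map Q).prod (μ.map (P a))) {p | p.1 * p.2 ≤ t} := by
          rw [← measure_mul_le_eq_prod_map hQm (hPm a) hQind]
          simp only [Finset.prod_cons, mul_comm, Q]
      _ ≤ ((μ.map Q).prod (volume.restrict (Ioo (0 : ℝ) 1))) {p | p.1 * p.2 ≤ t} :=
          prod_mul_le_le_of_Iic_le hQpos
            (map_Iic_le_uniform_of_superUniform (hPm a) (hpos a) (hsuper a)) t
      _ ≤ ENNReal.ofReal (fisherF (Finset.cons a s ha).card t) := by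
          rw [Finset.card_cons]
          refine prod_uniform_mul_le_le_fisherF_succ (fun r hr => ?_) ht
          rw [Measure.map_apply hQm measurableSet_Iic]
          exact ih hr

/-- Fisher's method remains valid for super-uniform p-values: if `P_1, ..., P_n` are
independent, take values in `(0,1]`, and satisfy `Pr(P_k < u) ≤ u` for all `u ∈ (0,1)`,
then `Pr(∏ P_k ≤ t) ≤ F_n(t)` for all `t ∈ (0,1]`. -/
theorem fisher_valid_super_uniform
    {Ω : Type*} [MeasurableSpace Ω] (μ : Measure Ω) [IsProbabilityMeasure μ]
    (n : ℕ) (hn : 0 < n) (P : Fin n → Ω → ℝ) (hPmeas : ∀ i, Measurable (P i))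
    (hindep : iIndepFun P μ)
    (hrange : ∀ i, ∀ ω, P i ω ∈ Set.Ioc (0 : ℝ) 1)
    (hsuper : ∀ i, ∀ u ∈ Set.Ioo (0 : ℝ) 1, μ {ω | P i ω < u} ≤ ENNReal.ofReal u) :
    ∀ t ∈ Set.Ioc (0 : ℝ) 1,
      μ {ω | ∏ i, P i ω ≤ t} ≤ ENNReal.ofReal (fisherF n t) := by
  intro t ht
  rcases ht.2.eq_or_lt with rfl | ht₁
  · simpa [fisherF_one hn] using prob_le_one
  · simpa using measure_prod_le_le_fisherF μ hPmeas hindep (fun i ω => (hrange i ω).1) hsuper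
      Finset.univ ⟨ht.1, ht₁⟩
end
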